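/- Let p be an odd prime with p ≡ 1 (mod 3), let ζ be a primitive cube root of unity in 𝔽_p, and let G = (C_p × C_p) ⋊ Sym(3) where Sym(3) acts on the standard 2-dimensional sum-zero module. Then the subgroup L generated by the element (1, −ζ) of the base group together with the 3-cycle b = (1 2 3) is core-free in G of order 3p. -/

import Mathlib

open Equiv Multiplicative Polynomial

/-- Coordinate-permutation automorphism of the base group. -/
def permAut (p q : ℕ) (σ : Equiv.Perm (Fin q)) :
    MulAut (Fin q → Multiplicative (ZMod p)) where
  toFun v := v ∘ σ.symm
  invFun v := v ∘ σ
  left_inv v := by funext i; simp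
  right_inv v := by funext i; simp
  map_mul' v w := rfl

/-- The action of `Sym(q)` on the base group of the wreath product. -/
def wreathAct (p q : ℕ) :
    Equiv.Perm (Fin q) →* MulAut (Fin q → Multiplicative (ZMod p)) where
  toFun := permAut p q
  map_one' := rfl
  map_mul' σ τ := rfl

/-- The wreath product `C_p ≀ Sym(q)`. -/
abbrev Wreath (p q : ℕ) :=
  (Fin q → Multiplicative (ZMod p)) ⋊[wreathAct p q] Equiv.Perm (Fin q)

/-- The complex reflection group `G(p,p,q)` as a subgroup of `C_p ≀ Sym(q)`. -/
def Gppq (p q : ℕ) : Subgroup (Wreath p q) where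
  carrier := {g | ∑ i, Multiplicative.toAdd (g.left i) = 0}
  one_mem' := by simp
  mul_mem' := by
    intro a b ha hb
    simp only [Set.mem_setOf_eq, SemidirectProduct.mul_left] at *
    have : ∑ i, toAdd ((wreathAct p q a.right b.left) i) = 0 := by
      have := Equiv.sum_comp a.right.symm (fun i => toAdd (b.left i))
      exact this.trans hb
    simp [Pi.mul_apply, toAdd_mul, Finset.sum_add_distrib, ha, this]
  inv_mem' := by
    intro a ha
    simp only [Set.mem_setOf_eq, SemidirectProduct.inv_left] at *
    have h := Equiv.sum_comp a.right (fun i => toAdd (a.left⁻¹ i))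
    have h2 : ∑ i, toAdd (a.left⁻¹ i) = 0 := by
      simp [toAdd_inv, Finset.sum_neg_distrib, ha]
    simp only [wreathAct, permAut, map_inv]
    exact h.trans h2

/-!
The base vector `v = (1, -1 - ζ, ζ)` is an eigenvector of the 3-cycle `b` for the eigenvalue `ζ`,
so its line `⟨v⟩` is `b`-invariant and `L = ⟨v⟩ ⋊ ⟨b⟩` has order `3p`. The transposition `(0 1)`
moves `⟨v⟩` off itself (otherwise `ζ = -2`, whence `3 = 0` and `ζ = 1`), so a normal subgroup of
`G(p,p,3)` inside `L` meets the base trivially. If it contained an element with rotation part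
`σ ≠ 1`, its commutator with the base element `(1, -1, 0)` would be a nontrivial base element
of it.
-/

namespace SemidirectProduct

open Subgroup
open scoped commutatorElement

variable {N G : Type*} [Group N] [Group G] {φ : G →* MulAut N}

def subgroup (A : Subgroup N) (B : Subgroup G) (hAB : ∀ g ∈ B, ∀ a ∈ A, φ g a ∈ A) :
    Subgroup (N ⋊[φ] G) where
  carrier := {x | x.left ∈ A ∧ x.right ∈ B}
  one_mem' := ⟨A.one_mem, B.one_mem⟩
  mul_mem' hx hy := ⟨A.mul_mem hx.1 (hAB _ hx.2 _ hy.1), B.mul_mem hx.2 hy.2⟩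
  inv_mem' hx := ⟨hAB _ (B.inv_mem hx.2) _ (A.inv_mem hx.1), B.inv_mem hx.2⟩

variable {A : Subgroup N} {B : Subgroup G} {hAB : ∀ g ∈ B, ∀ a ∈ A, φ g a ∈ A}

theorem card_subgroup : Nat.card (subgroup A B hAB) = Nat.card A * Nat.card B := by
  rw [← Nat.card_prod]
  exact Nat.card_congr
    ((equivProd.subtypeEquiv fun _ ↦ Iff.rfl).trans Equiv.subtypeProdEquivProd)

theorem closure_inl_inr_eq (a : N) (g : G)
    (h : ∀ x ∈ zpowers g, ∀ y ∈ zpowers a, φ x y ∈ zpowers a) :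
    closure {inl a, inr g} = subgroup (zpowers a) (zpowers g) h := by
  apply le_antisymm
  · rw [closure_le, Set.insert_subset_iff, Set.singleton_subset_iff]
    exact ⟨⟨mem_zpowers a, one_mem _⟩, ⟨one_mem _, mem_zpowers g⟩⟩
  · rintro x ⟨⟨k, hk⟩, ⟨n, hn⟩⟩
    rw [← inl_left_mul_inr_right x, ← hk, ← hn, map_zpow, map_zpow]
    exact mul_mem (zpow_mem (subset_closure (by simp)) k) (zpow_mem (subset_closure (by simp)) n)

theorem commutatorElement_inl {N : Type*} [CommGroup N] {φ : G →* MulAut N} (u : N)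
    (x : N ⋊[φ] G) : ⁅(inl u : N ⋊[φ] G), x⁆ = inl (u / φ x.right u) := by
  ext
  · rw [left_inl]
    simp [commutatorElement_def, div_eq_mul_inv, mul_right_comm _ x.left]
  · rw [right_inl]
    simp [commutatorElement_def]

end SemidirectProduct

theorem MonoidHom.apply_zpowers_mem_zpowers {N G : Type*} [Group N] [Group G]
    (φ : G →* MulAut N) {a : N} {g : G} (hg : IsOfFinOrder g) (hga : φ g a ∈ Subgroup.zpowers a) :
    ∀ x ∈ Subgroup.zpowers g, ∀ y ∈ Subgroup.zpowers a, φ x y ∈ Subgroup.zpowers a := by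
  have hpow (n : ℕ) : φ (g ^ n) a ∈ Subgroup.zpowers a := by
    induction n with
    | zero => simp
    | succ n ih =>
      obtain ⟨j, hj⟩ := hga
      rw [pow_succ, map_mul, MulAut.mul_apply, ← hj, map_zpow]
      exact zpow_mem ih j
  rintro x hx _ ⟨k, rfl⟩
  obtain ⟨n, rfl⟩ := hg.mem_powers_iff_mem_zpowers.mpr hx
  dsimp only
  rw [map_zpow]
  exact zpow_mem (hpow n) k

section ThirdRootOfUnity

variable {R : Type*} [CommRing R] {ζ : R}

theorem sq_add_self_add_one_eq_zero_of_orderOf_eq_three [IsDomain R] (hζ : orderOf ζ = 3) :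
    ζ ^ 2 + ζ + 1 = 0 := by
  have hζ1 : ζ - 1 ≠ 0 := sub_ne_zero.mpr fun h ↦ by simp [h] at hζ
  have hfac : (ζ - 1) * (ζ ^ 2 + ζ + 1) = 0 := by
    linear_combination (hζ ▸ pow_orderOf_eq_one ζ : ζ ^ 3 = 1)
  exact (mul_eq_zero.mp hfac).resolve_left hζ1

theorem ne_zero_of_sq_add_self_add_one_eq_zero [Nontrivial R] (hζ : ζ ^ 2 + ζ + 1 = 0) :
    ζ ≠ 0 := by
  rintro rfl
  simp at hζ

theorem two_add_ne_zero_of_sq_add_self_add_one_eq_zero (hζ1 : ζ ≠ 1) (hζ : ζ ^ 2 + ζ + 1 = 0) :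
    2 + ζ ≠ 0 := fun h ↦ hζ1 (by linear_combination ζ * h - hζ)

end ThirdRootOfUnity

section Wreath

open SemidirectProduct Subgroup
open scoped commutatorElement

variable {p : ℕ}

theorem inl_mem_Gppq_iff {q : ℕ} {a : Fin q → Multiplicative (ZMod p)} :
    inl a ∈ Gppq p q ↔ ∑ i, toAdd (a i) = 0 :=
  Iff.rfl

theorem inr_mem_Gppq {q : ℕ} (σ : Perm (Fin q)) : inr σ ∈ Gppq p q := by
  show ∑ i, toAdd ((inr σ : Wreath p q).left i) = 0
  simp

theorem wreathAct_apply {q : ℕ} (σ : Perm (Fin q)) (v : Fin q → Multiplicative (ZMod p))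
    (i : Fin q) : wreathAct p q σ v i = v (σ.symm i) :=
  rfl

def zetaVec (ζ : ZMod p) : Fin 3 → Multiplicative (ZMod p) :=
  ![ofAdd 1, ofAdd (-1 - ζ), ofAdd ζ]

theorem wreathAct_finRotate_zetaVec [NeZero p] {ζ : ZMod p} (hζ : ζ ^ 2 + ζ + 1 = 0) :
    wreathAct p 3 (finRotate 3) (zetaVec ζ) = zetaVec ζ ^ ζ.val := by
  funext i
  apply toAdd.injective
  fin_cases i <;> simp [wreathAct_apply, zetaVec] <;> grind

theorem wreathAct_zpowers_finRotate_mem_zpowers_zetaVec [NeZero p] {ζ : ZMod p}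
    (hζ : ζ ^ 2 + ζ + 1 = 0) :
    ∀ σ ∈ zpowers (finRotate 3), ∀ a ∈ zpowers (zetaVec ζ),
      wreathAct p 3 σ a ∈ zpowers (zetaVec ζ) :=
  (wreathAct p 3).apply_zpowers_mem_zpowers (isOfFinOrder_of_finite _)
    (wreathAct_finRotate_zetaVec hζ ▸ npow_mem_zpowers _ _)

theorem card_zpowers_zetaVec [Fact p.Prime] (ζ : ZMod p) :
    Nat.card (zpowers (zetaVec ζ)) = p := by
  rw [Nat.card_zpowers]
  refine orderOf_eq_prime ?_ ?_
  · funext i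
    apply toAdd.injective
    simp
  · intro h
    simpa [zetaVec] using congrFun h 0

theorem card_zpowers_finRotate_three : Nat.card (zpowers (finRotate 3)) = 3 := by
  rw [Nat.card_zpowers]
  exact orderOf_eq_prime (by decide) (by decide)

theorem eq_one_of_mem_zpowers_zetaVec_of_swap_mem [Fact p.Prime] {ζ : ZMod p} (hζ1 : ζ ≠ 1)
    (hζ : ζ ^ 2 + ζ + 1 = 0) {a : Fin 3 → Multiplicative (ZMod p)}
    (ha : a ∈ zpowers (zetaVec ζ)) (hsa : wreathAct p 3 (swap 0 1) a ∈ zpowers (zetaVec ζ)) :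
    a = 1 := by
  obtain ⟨k, rfl⟩ := ha
  obtain ⟨j, hj⟩ := hsa
  have h1 := congrArg toAdd (congrFun hj 1)
  have h2 := congrArg toAdd (congrFun hj 2)
  have hs1 : (swap 0 1 : Perm (Fin 3)) 1 = 0 := by decide
  have hs2 : (swap 0 1 : Perm (Fin 3)) 2 = 2 := by decide
  simp only [wreathAct_apply, symm_swap, hs1, hs2, zetaVec, Pi.pow_apply, Matrix.cons_val_zero,
    Matrix.cons_val_one, Matrix.cons_val, toAdd_zpow, toAdd_ofAdd, zsmul_eq_mul, mul_one] at h1 h2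
  have hkj : (k : ZMod p) = j :=
    mul_right_cancel₀ (ne_zero_of_sq_add_self_add_one_eq_zero hζ) h2.symm
  have hk : (k : ZMod p) = 0 := by
    refine (mul_eq_zero.mp ?_).resolve_right
      (two_add_ne_zero_of_sq_add_self_add_one_eq_zero hζ1 hζ)
    linear_combination (1 + ζ) * hkj - h1
  funext i
  apply toAdd.injective
  simp [hk]

theorem eq_one_of_mem_zpowers_finRotate_of_fixes [Fact (1 < p)] {σ : Perm (Fin 3)}
    (hσ : σ ∈ zpowers (finRotate 3))
    (hfix : wreathAct p 3 σ ![ofAdd 1, ofAdd (-1), 1] = ![ofAdd 1, ofAdd (-1), 1]) :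
    σ = 1 := by
  obtain ⟨n, rfl⟩ := mem_powers_iff_mem_zpowers.mpr hσ
  rw [isCycle_finRotate.pow_eq_one_iff' (x := 2) (by decide)]
  have h2 := (congrFun hfix ((finRotate 3 ^ n) 2)).symm
  rw [wreathAct_apply, Equiv.symm_apply_apply] at h2
  show (finRotate 3 ^ n) 2 = 2
  revert h2
  generalize (finRotate 3 ^ n) 2 = j
  fin_cases j <;> simp

theorem inl_zetaVec_mem_Gppq (ζ : ZMod p) : inl (zetaVec ζ) ∈ Gppq p 3 := by
  rw [inl_mem_Gppq_iff, Fin.sum_univ_three]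
  change (1 : ZMod p) + (-1 - ζ) + ζ = 0
  ring

def zetaSubgroup [NeZero p] (ζ : ZMod p) (hζ : ζ ^ 2 + ζ + 1 = 0) : Subgroup (Wreath p 3) :=
  SemidirectProduct.subgroup (zpowers (zetaVec ζ)) (zpowers (finRotate 3))
    (wreathAct_zpowers_finRotate_mem_zpowers_zetaVec hζ)

theorem normalCore_zetaSubgroup_eq_bot [Fact p.Prime] {ζ : ZMod p} (hζ1 : ζ ≠ 1)
    (hζ : ζ ^ 2 + ζ + 1 = 0) :
    ((zetaSubgroup ζ hζ).comap (Gppq p 3).subtype).normalCore = ⊥ := by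
  set K := ((zetaSubgroup ζ hζ).comap (Gppq p 3).subtype).normalCore
  have hK : ∀ y ∈ K, (y : Wreath p 3) ∈ zetaSubgroup ζ hζ :=
    fun y hy ↦ mem_comap.mp (normalCore_le _ hy)
  have left_eq_one : ∀ y ∈ K, (y : Wreath p 3).right = 1 → (y : Wreath p 3).left = 1 := by
    intro y hy hy1
    have hconj := hK _ ((normalCore_normal _).conj_mem y hy ⟨_, inr_mem_Gppq (swap 0 1)⟩)
    refine eq_one_of_mem_zpowers_zetaVec_of_swap_mem hζ1 hζ (hK y hy).1 ?_
    convert hconj.1 using 1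
    rw [← inl_left_mul_inr_right (y : Wreath p 3), hy1]
    simp
  rw [eq_bot_iff_forall]
  intro x hx
  have hright : (x : Wreath p 3).right = 1 := by
    set u : Fin 3 → Multiplicative (ZMod p) := ![ofAdd 1, ofAdd (-1), 1]
    have hu : inl u ∈ Gppq p 3 := by simp [u, inl_mem_Gppq_iff, Fin.sum_univ_three]
    have hc : ⁅(⟨_, hu⟩ : Gppq p 3), x⁆ ∈ K := by
      rw [commutatorElement_def]
      exact mul_mem ((normalCore_normal _).conj_mem x hx _) (inv_mem hx)
    have hcx : ((⁅(⟨_, hu⟩ : Gppq p 3), x⁆ : Gppq p 3) : Wreath p 3) =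
        inl (u / wreathAct p 3 (x : Wreath p 3).right u) :=
      commutatorElement_inl u _
    have hfix := left_eq_one _ hc (by rw [hcx, right_inl])
    rw [hcx, left_inl, div_eq_one] at hfix
    exact eq_one_of_mem_zpowers_finRotate_of_fixes (hK x hx).2 hfix.symm
  exact Subtype.ext (SemidirectProduct.ext (left_eq_one x hx hright) hright)

end Wreath

theorem stmt10_general (p : ℕ) (hp : p.Prime)
    (ζ : ZMod p) (hζ : orderOf ζ = 3) :
    let v : Fin 3 → Multiplicative (ZMod p) :=
      ![Multiplicative.ofAdd 1, Multiplicative.ofAdd (-1 - ζ), Multiplicative.ofAdd ζ]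
    let L : Subgroup (Wreath p 3) :=
      Subgroup.closure {SemidirectProduct.inl v, SemidirectProduct.inr (finRotate 3)}
    L ≤ Gppq p 3 ∧ Nat.card L = 3 * p ∧
      Subgroup.normalCore (L.comap (Gppq p 3).subtype) = ⊥ := by
  intro v L
  have : Fact p.Prime := ⟨hp⟩
  have hζ1 : ζ ≠ 1 := fun h ↦ by simp [h] at hζ
  have hζ2 := sq_add_self_add_one_eq_zero_of_orderOf_eq_three hζ
  have hL : L = zetaSubgroup ζ hζ2 := SemidirectProduct.closure_inl_inr_eq _ _ _
  refine ⟨?_, ?_, ?_⟩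
  · rw [Subgroup.closure_le, Set.insert_subset_iff, Set.singleton_subset_iff]
    exact ⟨inl_zetaVec_mem_Gppq ζ, inr_mem_Gppq _⟩
  · rw [hL, zetaSubgroup, SemidirectProduct.card_subgroup, card_zpowers_zetaVec,
      card_zpowers_finRotate_three, mul_comm]
  · rw [hL]
    exact normalCore_zetaSubgroup_eq_bot hζ1 hζ2

theorem stmt10 (p : ℕ) (hp : p.Prime) (hop : Odd p) (hmod : p % 3 = 1)
    (ζ : ZMod p) (hζ : orderOf ζ = 3) :
    let v : Fin 3 → Multiplicative (ZMod p) :=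
      ![Multiplicative.ofAdd 1, Multiplicative.ofAdd (-1 - ζ), Multiplicative.ofAdd ζ]
    let L : Subgroup (Wreath p 3) :=
      Subgroup.closure {SemidirectProduct.inl v, SemidirectProduct.inr (finRotate 3)}
    L ≤ Gppq p 3 ∧ Nat.card L = 3 * p ∧
      Subgroup.normalCore (L.comap (Gppq p 3).subtype) = ⊥ :=
  stmt10_general p hp ζ hζ
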